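/- arXiv:1801.03319 — 3 statements merged into one kernel-verified Lean document; each statement's English description precedes it below -/
import Mathlib

section
/- Let X_n = (x_{jk}) be an m×n random matrix whose entries are i.i.d. complex variables with mean zero, variance one, and E|x_{11}|^{6+δ} = μ < ∞ for some 0<δ<1; let B_n = (b_{jk}) be p×m with b_j = (Σ_{l=1}^p |b_{lj}|²)^{1/2} ≤ C_1 for all j and Σ_{k=1}^m b_k² ≤ C_2 p, and p/n → c ∈ (0,∞). Define the truncated matrix hat-X_n = (hat-x_{jk}) with hat-x_{jk} = x_{jk}·1(|x_{jk}| ≤ n^{1/2−η}/b_j), where η = (δ/6)/(6+δ). Then P( X_n ≠ hat-X_n infinitely often ) = 0; in fact Σ_n P(X_n ≠ hat-X_n) < ∞. -/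
/-! Each entry of `X_n` is truncated only if `|x| > n^{1/2-η}/b_j`, an event of probability at most
`E|x|^{6+δ} b_j^{6+δ} / n^{3+δ/3}` by Markov's inequality, since `(1/2 - η)(6 + δ) = 3 + δ/3`.
Bounding `b_j^{6+δ} ≤ C₁^{4+δ} b_j^2` and summing over the `n` columns and the rows,
`∑_j b_j^2 ≤ C₂ p = O(n)` gives `P(X_n ≠ X̂_n) = O(n^{-1-δ/3})`, which is summable;
Borel–Cantelli finishes the proof. -/

open MeasureTheory ProbabilityTheory Filter Matrix Set
open scoped Topology Matrix.Norms.L2Operator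

theorem rpow_le_rpow_sub_two_mul_sq {b C r : ℝ} (hb : 0 ≤ b) (hbC : b ≤ C) (hr : 2 ≤ r) :
    b ^ r ≤ C ^ (r - 2) * b ^ 2 := by
  calc b ^ r = b ^ (r - 2) * b ^ 2 := by
        rw [← Real.rpow_natCast, ← Real.rpow_add' hb (by norm_num; linarith)]
        norm_num
    _ ≤ C ^ (r - 2) * b ^ 2 := by gcongr

section Markov

variable {E : Type*} [NormedAddCommGroup E] [MeasurableSpace E] [OpensMeasurableSpace E]
  {ν : Measure E} {r T : ℝ}

theorem measure_lt_norm_le_integral_rpow_div (hr : 0 ≤ r) (hT : 0 < T)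
    (hint : Integrable (fun z => ‖z‖ ^ r) ν) :
    ν {z | T < ‖z‖} ≤ ENNReal.ofReal ((∫ z, ‖z‖ ^ r ∂ν) / T ^ r) := by
  have hTr : 0 < T ^ r := Real.rpow_pos_of_pos hT r
  calc ν {z | T < ‖z‖} ≤ ν {z | ENNReal.ofReal (T ^ r) ≤ ENNReal.ofReal (‖z‖ ^ r)} :=
        measure_mono fun z hz =>
          ENNReal.ofReal_le_ofReal (Real.rpow_le_rpow hT.le hz.le hr)
    _ ≤ (∫⁻ z, ENNReal.ofReal (‖z‖ ^ r) ∂ν) / ENNReal.ofReal (T ^ r) :=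
        meas_ge_le_lintegral_div (by fun_prop) (by simpa using hTr) ENNReal.ofReal_ne_top
    _ = ENNReal.ofReal ((∫ z, ‖z‖ ^ r ∂ν) / T ^ r) := by
        rw [← ofReal_integral_eq_lintegral_ofReal hint (ae_of_all _ fun z => by positivity),
          ENNReal.ofReal_div_of_pos hTr]

theorem measure_lt_norm_mul_le {b C : ℝ} (hr : 2 ≤ r) (hT : 0 < T) (hbC : b ≤ C)
    (hint : Integrable (fun z => ‖z‖ ^ r) ν) :
    ν {z | T < ‖z‖ * b} ≤
      ENNReal.ofReal ((∫ z, ‖z‖ ^ r ∂ν) * C ^ (r - 2) * b ^ 2 / T ^ r) := by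
  rcases le_or_gt b 0 with hb | hb
  · have hempty : {z : E | T < ‖z‖ * b} = ∅ := eq_empty_of_forall_notMem fun z hz =>
      (mul_nonpos_of_nonneg_of_nonpos (norm_nonneg z) hb).not_gt (hT.trans hz)
    simp [hempty]
  have hI : 0 ≤ ∫ z, ‖z‖ ^ r ∂ν := integral_nonneg fun z => by positivity
  calc ν {z | T < ‖z‖ * b} = ν {z | T / b < ‖z‖} := by simp_rw [div_lt_iff₀ hb]
    _ ≤ ENNReal.ofReal ((∫ z, ‖z‖ ^ r ∂ν) / (T / b) ^ r) :=
        measure_lt_norm_le_integral_rpow_div (by linarith) (div_pos hT hb) hint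
    _ ≤ _ := by
        rw [Real.div_rpow hT.le hb.le, div_div_eq_mul_div, mul_assoc]
        gcongr
        exact rpow_le_rpow_sub_two_mul_sq hb.le hbC hr

end Markov

theorem measure_ne_le_sum_card_mul {Ω ι κ E : Type*} [MeasurableSpace Ω]
    [Fintype ι] [Fintype κ]
    [NormedAddCommGroup E] [MeasurableSpace E] [OpensMeasurableSpace E]
    {μ : Measure Ω} {ν : Measure E} {Y Ŷ : Ω → Matrix ι κ E} {w : ι → ℝ} {T : ℝ}
    (hmeas : ∀ j k, Measurable fun ω => Y ω j k) (hlaw : ∀ j k, μ.map (fun ω => Y ω j k) = ν)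
    (htrunc : ∀ ω j k, ‖Y ω j k‖ * w j ≤ T → Ŷ ω j k = Y ω j k) :
    μ {ω | Y ω ≠ Ŷ ω} ≤ ∑ j, Fintype.card κ * ν {z | T < ‖z‖ * w j} := by
  set S : ι → Set E := fun j => {z | T < ‖z‖ * w j}
  have hsub : {ω | Y ω ≠ Ŷ ω} ⊆ ⋃ j, ⋃ k, (fun ω => Y ω j k) ⁻¹' S j := by
    intro ω hω
    simp only [S, mem_iUnion, mem_preimage, mem_ofPred_eq]
    by_contra! hle
    exact hω (Matrix.ext fun j k => (htrunc ω j k (hle j k)).symm)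
  have hlawS : ∀ j k, μ ((fun ω => Y ω j k) ⁻¹' S j) = ν (S j) := fun j k => by
    rw [← hlaw j k, Measure.map_apply (hmeas j k)
      (measurableSet_lt measurable_const (measurable_norm.mul_const _))]
  calc μ {ω | Y ω ≠ Ŷ ω} ≤ μ (⋃ j, ⋃ k, (fun ω => Y ω j k) ⁻¹' S j) := measure_mono hsub
    _ ≤ ∑ j, ∑ k, μ ((fun ω => Y ω j k) ⁻¹' S j) :=
        (measure_iUnion_fintype_le μ _).trans
          (Finset.sum_le_sum fun j _ => measure_iUnion_fintype_le μ _)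
    _ = ∑ j, Fintype.card κ * ν (S j) := by simp [hlawS]

theorem measure_ne_le_ofReal_card_mul {Ω ι κ E : Type*} [MeasurableSpace Ω]
    [Fintype ι] [Fintype κ]
    [NormedAddCommGroup E] [MeasurableSpace E] [OpensMeasurableSpace E]
    {μ : Measure Ω} {ν : Measure E} {Y Ŷ : Ω → Matrix ι κ E} {w : ι → ℝ} {r T C : ℝ}
    (hr : 2 ≤ r) (hT : 0 < T) (hC : 0 ≤ C) (hwC : ∀ j, w j ≤ C)
    (hint : Integrable (fun z => ‖z‖ ^ r) ν)
    (hmeas : ∀ j k, Measurable fun ω => Y ω j k) (hlaw : ∀ j k, μ.map (fun ω => Y ω j k) = ν)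
    (htrunc : ∀ ω j k, ‖Y ω j k‖ * w j ≤ T → Ŷ ω j k = Y ω j k) :
    μ {ω | Y ω ≠ Ŷ ω} ≤ ENNReal.ofReal
      (Fintype.card κ * ((∫ z, ‖z‖ ^ r ∂ν) * C ^ (r - 2) * ∑ j, w j ^ 2) / T ^ r) := by
  have hI : 0 ≤ ∫ z, ‖z‖ ^ r ∂ν := integral_nonneg fun z => by positivity
  calc μ {ω | Y ω ≠ Ŷ ω} ≤ ∑ j, Fintype.card κ * ν {z | T < ‖z‖ * w j} :=
        measure_ne_le_sum_card_mul hmeas hlaw htrunc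
    _ ≤ ∑ j, Fintype.card κ *
          ENNReal.ofReal ((∫ z, ‖z‖ ^ r ∂ν) * C ^ (r - 2) * w j ^ 2 / T ^ r) := by
        gcongr with j
        exact measure_lt_norm_mul_le hr hT (hwC j) hint
    _ = _ := by
        simp_rw [← ENNReal.ofReal_natCast, ← ENNReal.ofReal_mul (Nat.cast_nonneg _)]
        rw [← ENNReal.ofReal_sum_of_nonneg fun j _ => by positivity]
        congr 1
        rw [Finset.mul_sum, Finset.mul_sum, Finset.sum_div]
        exact Finset.sum_congr rfl fun j _ => by ring

theorem mul_mul_div_rpow_add_two_le {K x S B A s : ℝ} (hK : 0 ≤ K) (hx : 0 < x) (hS : S ≤ B)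
    (hA : B / x ≤ A) : x * (K * S) / x ^ (s + 2) ≤ K * A * x ^ (-s) := by
  calc x * (K * S) / x ^ (s + 2) = K * (S / x) * x ^ (-s) := by
        rw [Real.rpow_add hx, Real.rpow_neg hx.le, Real.rpow_two]
        field_simp
    _ ≤ K * A * x ^ (-s) := by gcongr; exact (div_le_div_of_nonneg_right hS hx.le).trans hA

theorem tsum_ne_top_of_le_ofReal {α : Type*} {f : α → ENNReal} {g : α → ℝ} (hg : Summable g)
    (hfg : ∀ n, f n ≤ ENNReal.ofReal (g n)) : ∑' n, f n ≠ ⊤ :=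
  ne_top_of_le_ne_top (ENNReal.tsum_coe_ne_top_iff_summable.2 hg.toNNReal)
    (ENNReal.tsum_le_tsum hfg)

theorem truncation_borel_cantelli_general
    {Ω : Type*} [MeasurableSpace Ω] (μ : Measure Ω)
    (p m : ℕ → ℕ) (c : ℝ)
    (hcn : Tendsto (fun n => (p n : ℝ) / n) atTop (𝓝 c))
    (δ : ℝ) (hδ0 : 0 < δ)
    (η : ℝ) (hη : η = δ / 6 / (6 + δ))
    (X : ∀ n, Ω → Matrix (Fin (m n)) (Fin n) ℂ)
    (ν : Measure ℂ)
    (hXmeas : ∀ n j k, Measurable fun ω => X n ω j k)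
    (hXlaw : ∀ n j k, Measure.map (fun ω => X n ω j k) μ = ν)
    (hmomint : Integrable (fun z : ℂ => ‖z‖ ^ ((6 : ℝ) + δ)) ν)
    (bcol : ∀ n, Fin (m n) → ℝ)
    (C₁ C₂ : ℝ)
    (hb1 : ∀ n j, bcol n j ≤ C₁)
    (hb2 : ∀ n, ∑ k, bcol n k ^ 2 ≤ C₂ * p n)
    (Xh : ∀ n, Ω → Matrix (Fin (m n)) (Fin n) ℂ)
    (hXh : ∀ n ω j k, Xh n ω j k =
      if ‖X n ω j k‖ * bcol n j ≤ (n : ℝ) ^ ((1 : ℝ) / 2 - η) then X n ω j k else 0) :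
    (∑' n, μ {ω | X n ω ≠ Xh n ω}) ≠ ⊤ ∧
      μ (Filter.limsup (fun n => {ω | X n ω ≠ Xh n ω}) atTop) = 0 := by
  set s : ℝ := 1 + δ / 3 with hs
  set C : ℝ := max C₁ 0
  set K : ℝ := (∫ z, ‖z‖ ^ ((6 : ℝ) + δ) ∂ν) * C ^ ((6 : ℝ) + δ - 2)
  have hK : 0 ≤ K := mul_nonneg (integral_nonneg fun z => by positivity) (by positivity)
  obtain ⟨A, hA⟩ := (hcn.const_mul C₂).bddAbove_range
  have hbound : ∀ n, μ {ω | X n ω ≠ Xh n ω} ≤ ENNReal.ofReal (K * A * (n : ℝ) ^ (-s)) := by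
    rintro (_ | n)
    · have hempty : ∀ ω, X 0 ω = Xh 0 ω := fun ω => Matrix.ext fun _ k => k.elim0
      simp [hempty]
    set T : ℝ := ((n + 1 : ℕ) : ℝ) ^ ((1 : ℝ) / 2 - η)
    have hTr : T ^ ((6 : ℝ) + δ) = ((n + 1 : ℕ) : ℝ) ^ (s + 2) := by
      rw [← Real.rpow_mul (by positivity), hη]
      congr 1
      field_simp
      ring
    calc μ {ω | X (n + 1) ω ≠ Xh (n + 1) ω}
        ≤ ENNReal.ofReal (Fintype.card (Fin (n + 1)) *
            (K * ∑ j, bcol (n + 1) j ^ 2) / T ^ ((6 : ℝ) + δ)) :=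
          measure_ne_le_ofReal_card_mul (by linarith) (by positivity) (le_max_right _ _)
            (fun j => (hb1 _ j).trans (le_max_left _ _)) hmomint (hXmeas _) (hXlaw _)
            fun ω j k h => by rw [hXh, if_pos h]
      _ ≤ ENNReal.ofReal (K * A * ((n + 1 : ℕ) : ℝ) ^ (-s)) := by
          rw [Fintype.card_fin, hTr]
          exact ENNReal.ofReal_le_ofReal (mul_mul_div_rpow_add_two_le hK (by positivity) (hb2 _)
            (by simpa [mul_div_assoc] using hA ⟨n + 1, rfl⟩))
  have hsum := tsum_ne_top_of_le_ofReal
    ((Real.summable_nat_rpow.2 (by rw [hs]; linarith)).mul_left (K * A)) hbound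
  exact ⟨hsum, measure_limsup_atTop_eq_zero hsum⟩

/-- **Truncation step.**  Let `X_n` have i.i.d. complex entries with mean `0`, variance `1`
and `E|x_{11}|^{6+δ} = μ₆ < ∞`, let `B_n` be `p×m` with column norms `b_j ≤ C₁` and
`∑_k b_k² ≤ C₂ p`, and `p/n → c ∈ (0,∞)`.  Let `X̂_n` be obtained from `X_n` by truncating
each entry at level `n^{1/2-η}/b_j`, `η = (δ/6)/(6+δ)`.  Then
`∑_n P(X_n ≠ X̂_n) < ∞`, and hence `P(X_n ≠ X̂_n infinitely often) = 0`. -/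
theorem truncation_borel_cantelli
    {Ω : Type*} [MeasurableSpace Ω] (μ : Measure Ω) [IsProbabilityMeasure μ]
    (p m : ℕ → ℕ) (c : ℝ) (hc : 0 < c)
    (hcn : Tendsto (fun n => (p n : ℝ) / n) atTop (𝓝 c))
    (δ : ℝ) (hδ0 : 0 < δ) (hδ1 : δ < 1)
    (η : ℝ) (hη : η = δ / 6 / (6 + δ))
    (X : ∀ n, Ω → Matrix (Fin (m n)) (Fin n) ℂ)
    (ν : Measure ℂ) [IsProbabilityMeasure ν]
    (hXmeas : ∀ n j k, Measurable fun ω => X n ω j k)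
    (hXlaw : ∀ n j k, Measure.map (fun ω => X n ω j k) μ = ν)
    (hXindep : ∀ n, iIndepFun
      (fun jk : Fin (m n) × Fin n => fun ω => X n ω jk.1 jk.2) μ)
    (hmean : ∫ z, z ∂ν = 0) (hvar : ∫ z, ‖z‖ ^ 2 ∂ν = 1)
    (μ₆ : ℝ) (hmom : ∫ z, ‖z‖ ^ ((6 : ℝ) + δ) ∂ν = μ₆)
    (hmomint : Integrable (fun z : ℂ => ‖z‖ ^ ((6 : ℝ) + δ)) ν)
    (B : ∀ n, Matrix (Fin (p n)) (Fin (m n)) ℂ)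
    (bcol : ∀ n, Fin (m n) → ℝ)
    (hbcol : ∀ n j, bcol n j = Real.sqrt (∑ l, ‖B n l j‖ ^ 2))
    (C₁ C₂ : ℝ)
    (hb1 : ∀ n j, bcol n j ≤ C₁)
    (hb2 : ∀ n, ∑ k, bcol n k ^ 2 ≤ C₂ * p n)
    (Xh : ∀ n, Ω → Matrix (Fin (m n)) (Fin n) ℂ)
    (hXh : ∀ n ω j k, Xh n ω j k =
      if ‖X n ω j k‖ * bcol n j ≤ (n : ℝ) ^ ((1 : ℝ) / 2 - η) then X n ω j k else 0) :
    (∑' n, μ {ω | X n ω ≠ Xh n ω}) ≠ ⊤ ∧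
      μ (Filter.limsup (fun n => {ω | X n ω ≠ Xh n ω}) atTop) = 0 :=
  truncation_borel_cantelli_general μ p m c hcn δ hδ0 η hη X ν hXmeas hXlaw hmomint bcol C₁ C₂ hb1
    hb2 Xh hXh
end

section
/- Let hat-X_n = (hat-x_{jk}) be the m×n truncated matrix with hat-x_{jk} = x_{jk}·1(|x_{jk}| ≤ n^{1/2−η}/b_j), where the x_{jk} are i.i.d. complex with mean zero, variance one and E|x_{11}|^{6+δ} = μ < ∞ for some 0<δ<1, η = (δ/6)/(6+δ), B_n is p×m with column norms b_j ≤ C_1 and Σ_k b_k² ≤ C_2 p, and p/n → c ∈ (0,∞). Let λ_k and hat-λ_k denote (in decreasing order) the k-th eigenvalues of (1/n) B_n hat-X_n hat-X_n* B_n* and of (1/n) B_n (hat-X_n − E hat-X_n)(hat-X_n − E hat-X_n)* B_n* respectively. Then max_{k ≤ n} | λ_k^{1/2} − hat-λ_k^{1/2} | ≤ C n^{−3/2} for a constant C not depending on n. -/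
open MeasureTheory ProbabilityTheory Filter Matrix Set
open scoped Topology Matrix.Norms.L2Operator

/-- The `k`-th largest eigenvalue (`k = 0` is the largest) of a Hermitian matrix. -/
noncomputable def kthLargest {p : ℕ} {A : Matrix (Fin p) (Fin p) ℂ}
    (hA : A.IsHermitian) (k : Fin p) : ℝ :=
  (hA.eigenvalues ∘ Tuple.sort hA.eigenvalues) k.rev


/-!
The singular values of `n^{-1/2} B X̂` and `n^{-1/2} B (X̂ - E X̂)` differ by at most the operator
norm of `n^{-1/2} B E X̂` (Weyl's inequality for singular values, which follows from the
Courant–Fischer min-max characterisation of eigenvalues). This norm is at most the largest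
Euclidean norm of a column of `B E X̂`, and column `k` has norm at most `∑ⱼ |E x̂ⱼₖ| bⱼ`.
As the entries have mean zero, `E x̂ⱼₖ` is minus the mean of `x` over the tail
`|x| > n^{1/2-η} / bⱼ`, so `|E x̂ⱼₖ| ≤ μ (bⱼ n^{-(1/2-η)})^{5+δ}`. With `bⱼ ≤ C₁` and
`∑ bⱼ² ≤ C₂ p = O(n)` the column sums are `O(n^{1-(1/2-η)(5+δ)})`, and the choice of `η`
makes this exponent at most `-3/2`.
-/

open scoped InnerProductSpace ComplexOrder

section CourantFischer

variable {p : ℕ} {A : Matrix (Fin p) (Fin p) ℂ}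

lemma Matrix.IsHermitian.repr_eq_zero_of_mem_span (hA : A.IsHermitian) {T : Finset (Fin p)}
    {x : EuclideanSpace ℂ (Fin p)} (hx : x ∈ Submodule.span ℂ (hA.eigenvectorBasis '' T))
    {s : Fin p} (hs : s ∉ T) : hA.eigenvectorBasis.repr x s = 0 := by
  rw [hA.eigenvectorBasis.repr_apply_apply]
  induction hx using Submodule.span_induction with
  | mem y hy =>
    obtain ⟨t, ht, rfl⟩ := hy
    exact hA.eigenvectorBasis.orthonormal.2 fun h => hs (h ▸ ht)
  | zero => simp
  | add y z _ _ hy hz => rw [inner_add_right, hy, hz, add_zero]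
  | smul c y _ hy => rw [inner_smul_right, hy, mul_zero]

lemma Matrix.IsHermitian.repr_toEuclideanLin_apply (hA : A.IsHermitian)
    (x : EuclideanSpace ℂ (Fin p)) (t : Fin p) :
    hA.eigenvectorBasis.repr (Matrix.toEuclideanLin A x) t
      = hA.eigenvalues t * hA.eigenvectorBasis.repr x t := by
  have hAe : Matrix.toEuclideanLin A (hA.eigenvectorBasis t)
      = hA.eigenvalues t • hA.eigenvectorBasis t :=
    congrArg (WithLp.toLp 2) (hA.mulVec_eigenvectorBasis t)
  rw [OrthonormalBasis.repr_apply_apply, OrthonormalBasis.repr_apply_apply,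
    ← LinearMap.adjoint_inner_left, ← Matrix.toEuclideanLin_conjTranspose_eq_adjoint, hA.eq,
    hAe, RCLike.real_smul_eq_coe_smul (K := ℂ), inner_smul_left, RCLike.conj_ofReal]
  rfl

lemma Matrix.IsHermitian.re_inner_sub_mul_norm_sq (hA : A.IsHermitian) (r : ℝ)
    (x : EuclideanSpace ℂ (Fin p)) :
    RCLike.re ⟪x, Matrix.toEuclideanLin A x⟫_ℂ - r * ‖x‖ ^ 2
      = ∑ s, (hA.eigenvalues s - r) * ‖hA.eigenvectorBasis.repr x s‖ ^ 2 := by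
  rw [← hA.eigenvectorBasis.repr.inner_map_map, PiLp.inner_apply,
    ← hA.eigenvectorBasis.repr.norm_map x, EuclideanSpace.norm_sq_eq,
    Finset.mul_sum, map_sum, ← Finset.sum_sub_distrib]
  refine Finset.sum_congr rfl fun s _ => ?_
  rw [hA.repr_toEuclideanLin_apply, RCLike.inner_apply, mul_assoc, RCLike.mul_conj]
  simp only [Complex.coe_algebraMap, ← Complex.ofReal_pow, RCLike.mul_re, RCLike.re_to_complex,
    Complex.ofReal_re, RCLike.im_to_complex, Complex.ofReal_im, mul_zero, sub_zero]
  ring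

lemma Matrix.IsHermitian.mul_norm_sq_le_re_inner_of_mem_span (hA : A.IsHermitian)
    {T : Finset (Fin p)} {r : ℝ} (hr : ∀ s ∈ T, r ≤ hA.eigenvalues s)
    {x : EuclideanSpace ℂ (Fin p)} (hx : x ∈ Submodule.span ℂ (hA.eigenvectorBasis '' T)) :
    r * ‖x‖ ^ 2 ≤ RCLike.re ⟪x, Matrix.toEuclideanLin A x⟫_ℂ := by
  have hsum : 0 ≤ ∑ s, (hA.eigenvalues s - r) * ‖hA.eigenvectorBasis.repr x s‖ ^ 2 := by
    refine Finset.sum_nonneg fun s _ => ?_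
    by_cases hs : s ∈ T
    · exact mul_nonneg (sub_nonneg.2 (hr s hs)) (sq_nonneg _)
    · simp [hA.repr_eq_zero_of_mem_span hx hs]
  linarith [hA.re_inner_sub_mul_norm_sq r x]

lemma Matrix.IsHermitian.re_inner_le_mul_norm_sq_of_mem_span (hA : A.IsHermitian)
    {T : Finset (Fin p)} {r : ℝ} (hr : ∀ s ∈ T, hA.eigenvalues s ≤ r)
    {x : EuclideanSpace ℂ (Fin p)} (hx : x ∈ Submodule.span ℂ (hA.eigenvectorBasis '' T)) :
    RCLike.re ⟪x, Matrix.toEuclideanLin A x⟫_ℂ ≤ r * ‖x‖ ^ 2 := by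
  have hsum : ∑ s, (hA.eigenvalues s - r) * ‖hA.eigenvectorBasis.repr x s‖ ^ 2 ≤ 0 := by
    refine Finset.sum_nonpos fun s _ => ?_
    by_cases hs : s ∈ T
    · exact mul_nonpos_of_nonpos_of_nonneg (sub_nonpos.2 (hr s hs)) (sq_nonneg _)
    · simp [hA.repr_eq_zero_of_mem_span hx hs]
  linarith [hA.re_inner_sub_mul_norm_sq r x]

lemma OrthonormalBasis.finrank_span_image {ι E : Type*} [Fintype ι] [NormedAddCommGroup E]
    [InnerProductSpace ℂ E] (b : OrthonormalBasis ι ℂ E) (T : Finset ι) :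
    Module.finrank ℂ (Submodule.span ℂ (b '' T)) = T.card := by
  classical
  have hli := b.orthonormal.linearIndependent
  rw [← Finset.coe_image,
    finrank_span_finset_eq_card (by simpa using (hli.linearIndepOn T).id_image),
    Finset.card_image_of_injective _ hli.injective]

lemma exists_finrank_eq_forall_kthLargest_mul_le (hA : A.IsHermitian) (k : Fin p) :
    ∃ V : Submodule ℂ (EuclideanSpace ℂ (Fin p)), Module.finrank ℂ V = k + 1 ∧
      ∀ x ∈ V, kthLargest hA k * ‖x‖ ^ 2 ≤ RCLike.re ⟪x, Matrix.toEuclideanLin A x⟫_ℂ := by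
  refine ⟨Submodule.span ℂ (hA.eigenvectorBasis ''
      ↑((Finset.Ici k.rev).image (Tuple.sort hA.eigenvalues))), ?_, fun x hx => ?_⟩
  · rw [OrthonormalBasis.finrank_span_image,
      Finset.card_image_of_injective _ (Tuple.sort hA.eigenvalues).injective,
      Fin.card_Ici, Fin.val_rev]
    omega
  · refine hA.mul_norm_sq_le_re_inner_of_mem_span (fun s hs => ?_) hx
    obtain ⟨i, hi, rfl⟩ := Finset.mem_image.mp hs
    exact Tuple.monotone_sort hA.eigenvalues (Finset.mem_Ici.mp hi)

lemma exists_mem_ne_zero_re_inner_le_kthLargest_mul (hA : A.IsHermitian) (k : Fin p)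
    (V : Submodule ℂ (EuclideanSpace ℂ (Fin p))) (hV : Module.finrank ℂ V = k + 1) :
    ∃ x ∈ V, x ≠ 0 ∧
      RCLike.re ⟪x, Matrix.toEuclideanLin A x⟫_ℂ ≤ kthLargest hA k * ‖x‖ ^ 2 := by
  set W := Submodule.span ℂ (hA.eigenvectorBasis ''
      ↑((Finset.Iic k.rev).image (Tuple.sort hA.eigenvalues)))
  have hW : Module.finrank ℂ W = p - k := by
    rw [OrthonormalBasis.finrank_span_image,
      Finset.card_image_of_injective _ (Tuple.sort hA.eigenvalues).injective,
      Fin.card_Iic, Fin.val_rev]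
    omega
  -- `V` and `W` have dimensions adding up to `p + 1`, so they meet nontrivially.
  have hVW : V ⊓ W ≠ ⊥ := by
    intro hbot
    have hsum := Submodule.finrank_sup_add_finrank_inf_eq V W
    have hsup : Module.finrank ℂ ↥(V ⊔ W) ≤ p :=
      (Submodule.finrank_le _).trans_eq finrank_euclideanSpace_fin
    rw [hbot, finrank_bot] at hsum
    omega
  obtain ⟨x, ⟨hxV, hxW⟩, hx0⟩ := Submodule.exists_mem_ne_zero_of_ne_bot hVW
  refine ⟨x, hxV, hx0, hA.re_inner_le_mul_norm_sq_of_mem_span (fun s hs => ?_) hxW⟩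
  obtain ⟨i, hi, rfl⟩ := Finset.mem_image.mp hs
  exact Tuple.monotone_sort hA.eigenvalues (Finset.mem_Iic.mp hi)

end CourantFischer

section Weyl

variable {p q : ℕ}

lemma re_inner_toEuclideanLin_mul_conjTranspose (A : Matrix (Fin p) (Fin q) ℂ)
    (x : EuclideanSpace ℂ (Fin p)) :
    RCLike.re ⟪x, Matrix.toEuclideanLin (A * Aᴴ) x⟫_ℂ = ‖Matrix.toEuclideanLin Aᴴ x‖ ^ 2 := by
  rw [toLpLin_mul_same, LinearMap.comp_apply, ← LinearMap.adjoint_inner_left,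
    ← Matrix.toEuclideanLin_conjTranspose_eq_adjoint, inner_self_eq_norm_sq]

lemma norm_toEuclideanLin_apply_le (A : Matrix (Fin p) (Fin q) ℂ)
    (x : EuclideanSpace ℂ (Fin q)) :
    ‖Matrix.toEuclideanLin A x‖ ≤ ‖A‖ * ‖x‖ :=
  A.l2_opNorm_mulVec x

lemma kthLargest_mul_conjTranspose_nonneg (A : Matrix (Fin p) (Fin q) ℂ)
    (h : (A * Aᴴ).IsHermitian) (k : Fin p) : 0 ≤ kthLargest h k :=
  (posSemidef_self_mul_conjTranspose A).eigenvalues_nonneg _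

lemma sqrt_kthLargest_le_add {A₁ A₂ : Matrix (Fin p) (Fin q) ℂ}
    (h₁ : (A₁ * A₁ᴴ).IsHermitian) (h₂ : (A₂ * A₂ᴴ).IsHermitian) (k : Fin p) :
    √(kthLargest h₁ k) ≤ √(kthLargest h₂ k) + ‖A₁ - A₂‖ := by
  obtain ⟨V, hV, hV₁⟩ := exists_finrank_eq_forall_kthLargest_mul_le h₁ k
  obtain ⟨x, hxV, hx0, hx₂⟩ := exists_mem_ne_zero_re_inner_le_kthLargest_mul h₂ k V hV
  have hsq : ∀ (A : Matrix (Fin p) (Fin q) ℂ) (h : (A * Aᴴ).IsHermitian),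
      √(kthLargest h k) * ‖x‖ = √(kthLargest h k * ‖x‖ ^ 2) := fun A h => by
    rw [Real.sqrt_mul (kthLargest_mul_conjTranspose_nonneg A h k),
      Real.sqrt_sq (norm_nonneg x)]
  have hlow : √(kthLargest h₁ k) * ‖x‖ ≤ ‖Matrix.toEuclideanLin A₁ᴴ x‖ := by
    have := Real.sqrt_le_sqrt (hV₁ x hxV)
    rwa [re_inner_toEuclideanLin_mul_conjTranspose, Real.sqrt_sq (norm_nonneg _), ← hsq]
      at this
  have hup : ‖Matrix.toEuclideanLin A₂ᴴ x‖ ≤ √(kthLargest h₂ k) * ‖x‖ := by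
    have := Real.sqrt_le_sqrt hx₂
    rwa [re_inner_toEuclideanLin_mul_conjTranspose, Real.sqrt_sq (norm_nonneg _), ← hsq]
      at this
  have hdiff : ‖Matrix.toEuclideanLin A₁ᴴ x‖
      ≤ ‖Matrix.toEuclideanLin A₂ᴴ x‖ + ‖A₁ - A₂‖ * ‖x‖ := by
    have h := norm_toEuclideanLin_apply_le (A₁ - A₂)ᴴ x
    rw [l2_opNorm_conjTranspose, conjTranspose_sub, map_sub, LinearMap.sub_apply] at h
    linarith [norm_sub_norm_le (Matrix.toEuclideanLin A₁ᴴ x) (Matrix.toEuclideanLin A₂ᴴ x)]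
  refine le_of_mul_le_mul_right ?_ (norm_pos_iff.mpr hx0)
  linarith

theorem abs_sqrt_kthLargest_sub_le {A₁ A₂ : Matrix (Fin p) (Fin q) ℂ}
    {S₁ S₂ : Matrix (Fin p) (Fin p) ℂ} (h₁ : S₁.IsHermitian) (h₂ : S₂.IsHermitian)
    (hS₁ : S₁ = A₁ * A₁ᴴ) (hS₂ : S₂ = A₂ * A₂ᴴ) (k : Fin p) :
    |√(kthLargest h₁ k) - √(kthLargest h₂ k)| ≤ ‖A₁ - A₂‖ := by
  subst hS₁ hS₂
  rw [abs_sub_le_iff]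
  constructor
  · linarith [sqrt_kthLargest_le_add h₁ h₂ k]
  · linarith [sqrt_kthLargest_le_add h₂ h₁ k, norm_sub_rev A₁ A₂]

end Weyl

section ColumnBounds

variable {𝕜 m n : Type*} [RCLike 𝕜] [Fintype m] [Fintype n]

lemma norm_toLp_mulVec_le (M : Matrix m n 𝕜) (v : n → 𝕜) :
    ‖WithLp.toLp 2 (M *ᵥ v)‖ ≤ ∑ j, ‖v j‖ * ‖WithLp.toLp 2 (fun i => M i j)‖ := by
  have hsum : WithLp.toLp 2 (M *ᵥ v) = ∑ j, v j • WithLp.toLp 2 (fun i => M i j) := by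
    ext i
    simp [mulVec, dotProduct, mul_comm]
  rw [hsum]
  exact (norm_sum_le _ _).trans_eq (by simp only [norm_smul])

lemma sum_norm_le_sqrt_card_mul_norm (x : EuclideanSpace 𝕜 n) :
    ∑ j, ‖x j‖ ≤ √(Fintype.card n) * ‖x‖ := by
  simpa [EuclideanSpace.norm_eq] using
    Real.sum_mul_le_sqrt_mul_sqrt Finset.univ (fun _ => (1 : ℝ)) fun j => ‖x j‖

variable [DecidableEq n]

lemma l2_opNorm_le_sqrt_card_mul {M : Matrix m n 𝕜} {s : ℝ} (hs : 0 ≤ s)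
    (hM : ∀ j, ‖WithLp.toLp 2 (fun i => M i j)‖ ≤ s) : ‖M‖ ≤ √(Fintype.card n) * s := by
  rw [l2_opNorm_def]
  refine ContinuousLinearMap.opNorm_le_bound _ (by positivity) fun x => ?_
  calc ‖WithLp.toLp 2 (M *ᵥ x)‖
      ≤ ∑ j, ‖x j‖ * ‖WithLp.toLp 2 (fun i => M i j)‖ := norm_toLp_mulVec_le M x
    _ ≤ ∑ j, ‖x j‖ * s := by gcongr with j; exact hM j
    _ ≤ √(Fintype.card n) * s * ‖x‖ := by
      rw [← Finset.sum_mul, mul_right_comm]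
      exact mul_le_mul_of_nonneg_right (sum_norm_le_sqrt_card_mul_norm x) hs

end ColumnBounds

section Centralization

variable {p m q : ℕ}

lemma inv_natCast_smul_mul_conjTranspose (A : Matrix (Fin p) (Fin m) ℂ) :
    (q : ℂ)⁻¹ • (A * Aᴴ) = ((√q : ℂ)⁻¹ • A) * ((√q : ℂ)⁻¹ • A)ᴴ := by
  rw [conjTranspose_smul, Matrix.smul_mul, Matrix.mul_smul, smul_smul, star_inv₀,
    Complex.star_def, Complex.conj_ofReal, ← mul_inv, ← Complex.ofReal_mul,
    Real.mul_self_sqrt q.cast_nonneg, Complex.ofReal_natCast]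

theorem abs_sqrt_kthLargest_sub_le_of_sum_norm_mul_norm_col_le (hq : 0 < q)
    (B : Matrix (Fin p) (Fin m) ℂ) (X E : Matrix (Fin m) (Fin q) ℂ) {s : ℝ}
    (hcol : ∀ k, ∑ j, ‖E j k‖ * ‖WithLp.toLp 2 (fun l => B l j)‖ ≤ s)
    {S₁ S₂ : Matrix (Fin p) (Fin p) ℂ} (h₁ : S₁.IsHermitian) (h₂ : S₂.IsHermitian)
    (hS₁ : S₁ = (q : ℂ)⁻¹ • (B * X * Xᴴ * Bᴴ))
    (hS₂ : S₂ = (q : ℂ)⁻¹ • (B * (X - E) * (X - E)ᴴ * Bᴴ)) (k : Fin p) :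
    |√(kthLargest h₁ k) - √(kthLargest h₂ k)| ≤ s := by
  have hs : 0 ≤ s := (Finset.sum_nonneg fun j _ => by positivity).trans (hcol ⟨0, hq⟩)
  have hBE : ‖B * E‖ ≤ √q * s := by
    simpa using l2_opNorm_le_sqrt_card_mul (M := B * E) hs fun k =>
      (norm_toLp_mulVec_le B fun j => E j k).trans (hcol k)
  have hS : ∀ Y : Matrix (Fin m) (Fin q) ℂ, (q : ℂ)⁻¹ • (B * Y * Yᴴ * Bᴴ)
      = ((√q : ℂ)⁻¹ • (B * Y)) * ((√q : ℂ)⁻¹ • (B * Y))ᴴ := fun Y => by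
    rw [← inv_natCast_smul_mul_conjTranspose, conjTranspose_mul, Matrix.mul_assoc (B * Y)]
  refine (abs_sqrt_kthLargest_sub_le h₁ h₂ (hS₁.trans (hS X)) (hS₂.trans (hS (X - E))) k).trans
    ?_
  have hq' : 0 < √(q : ℝ) := Real.sqrt_pos.mpr (Nat.cast_pos.mpr hq)
  rw [← smul_sub, ← Matrix.mul_sub, sub_sub_cancel, norm_smul, norm_inv, Complex.norm_real,
    Real.norm_of_nonneg hq'.le, inv_mul_le_iff₀ hq']
  exact hBE

end Centralization

section Truncation

lemma le_rpow_mul_div_rpow_of_lt_mul {a b t r : ℝ} (hr : 1 ≤ r) (hb : 0 ≤ b) (ht : 0 < t)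
    (h : t < a * b) : a ≤ a ^ r * (b / t) ^ (r - 1) := by
  have ha : 0 < a := pos_of_mul_pos_left (ht.trans h) hb
  have hab : 1 ≤ a * b / t := (one_le_div ht).2 h.le
  calc a = a * 1 := (mul_one a).symm
    _ ≤ a * (a * b / t) ^ (r - 1) := by
      gcongr
      exact Real.one_le_rpow hab (by linarith)
    _ = a ^ r * (b / t) ^ (r - 1) := by
      rw [mul_div_assoc, Real.mul_rpow ha.le (by positivity), ← mul_assoc,
        ← Real.rpow_one_add' ha.le (by linarith), add_sub_cancel]

lemma integrable_id_of_integrable_norm_rpow {ν : Measure ℂ} [IsFiniteMeasure ν] {r : ℝ}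
    (hr : 1 ≤ r) (hint : Integrable (fun z : ℂ => ‖z‖ ^ r) ν) : Integrable id ν := by
  have hmem : MemLp id (ENNReal.ofReal r) ν := by
    refine (integrable_norm_rpow_iff aestronglyMeasurable_id ?_ ENNReal.ofReal_ne_top).1 ?_
    · simp only [ne_eq, ENNReal.ofReal_eq_zero, not_le]; linarith
    · rwa [ENNReal.toReal_ofReal (by linarith)]
  exact hmem.integrable (ENNReal.one_le_ofReal.2 hr)

/-- Since `z` has mean zero, the truncated mean equals minus the mean over the tail
`‖z‖ > t / b`, where `‖z‖ ≤ ‖z‖ ^ r (b / t) ^ (r - 1)`. -/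
theorem norm_integral_truncation_le {ν : Measure ℂ} [IsFiniteMeasure ν]
    (hmean : ∫ z, z ∂ν = 0) {r : ℝ} (hr : 1 ≤ r) (hint : Integrable (fun z : ℂ => ‖z‖ ^ r) ν)
    {b t : ℝ} (hb : 0 ≤ b) (ht : 0 < t) :
    ‖∫ z, (if ‖z‖ * b ≤ t then z else 0) ∂ν‖ ≤ (∫ z, ‖z‖ ^ r ∂ν) * (b / t) ^ (r - 1) := by
  set S := {z : ℂ | ‖z‖ * b ≤ t}
  have hS : MeasurableSet S := measurableSet_le (by fun_prop) measurable_const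
  have hsplit : ∫ z in S, z ∂ν + ∫ z in Sᶜ, z ∂ν = 0 :=
    (integral_add_compl hS (integrable_id_of_integrable_norm_rpow hr hint)).trans hmean
  have htrunc : ∫ z, (if ‖z‖ * b ≤ t then z else 0) ∂ν = ∫ z in S, z ∂ν := by
    rw [← integral_indicator hS]
    rfl
  have htail : ‖∫ z in Sᶜ, z ∂ν‖ ≤ ∫ z in Sᶜ, ‖z‖ ^ r * (b / t) ^ (r - 1) ∂ν :=
    norm_integral_le_of_norm_le (hint.mul_const _).integrableOn
      (ae_restrict_of_forall_mem hS.compl fun z hz =>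
        le_rpow_mul_div_rpow_of_lt_mul hr hb ht (not_le.mp hz))
  rw [htrunc, eq_neg_of_add_eq_zero_left hsplit, norm_neg, ← integral_mul_const]
  exact htail.trans (setIntegral_le_integral (hint.mul_const _)
    (Eventually.of_forall fun z => by positivity))

theorem norm_integral_truncation_comp_le {Ω : Type*} [MeasurableSpace Ω] {μ : Measure Ω}
    {Y : Ω → ℂ} (hY : Measurable Y) {ν : Measure ℂ} [IsFiniteMeasure ν] (hlaw : μ.map Y = ν)
    (hmean : ∫ z, z ∂ν = 0) {r : ℝ} (hr : 1 ≤ r) (hint : Integrable (fun z : ℂ => ‖z‖ ^ r) ν)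
    {b t : ℝ} (hb : 0 ≤ b) (ht : 0 < t) :
    ‖∫ ω, (if ‖Y ω‖ * b ≤ t then Y ω else 0) ∂μ‖ ≤ (∫ z, ‖z‖ ^ r ∂ν) * (b / t) ^ (r - 1) := by
  have hmap := integral_map (μ := μ) hY.aemeasurable
    (f := fun z : ℂ => if ‖z‖ * b ≤ t then z else 0)
    (Measurable.ite (measurableSet_le (by fun_prop) measurable_const) measurable_id
      measurable_const).aestronglyMeasurable
  rw [← hmap, hlaw]
  exact norm_integral_truncation_le hmean hr hint hb ht

end Truncation

section Growth

lemma exists_nonneg_le_mul_of_tendsto_div {u : ℕ → ℝ} {c : ℝ}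
    (h : Tendsto (fun n => u n / n) atTop (𝓝 c)) :
    ∃ K, 0 ≤ K ∧ ∀ n : ℕ, 0 < n → u n ≤ K * n := by
  obtain ⟨K, hK⟩ := h.bddAbove_range
  refine ⟨max K 0, le_max_right K 0, fun n hn => ?_⟩
  have hn' : (0 : ℝ) < n := Nat.cast_pos.mpr hn
  calc u n ≤ K * n := (div_le_iff₀ hn').1 (hK ⟨n, rfl⟩)
    _ ≤ max K 0 * n := by gcongr; exact le_max_left K 0

lemma rpow_sub_one_div_mul_le {b C t r : ℝ} (hb : 0 ≤ b) (hbC : b ≤ C) (hr : 2 ≤ r)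
    (ht : 0 < t) :
    (b / t) ^ (r - 1) * b ≤ C ^ (r - 2) / t ^ (r - 1) * b ^ 2 := by
  have hsplit : b ^ (r - 1) * b = b ^ (r - 2) * b ^ 2 := by
    rw [show r - 1 = (r - 2) + 1 by ring, Real.rpow_add' hb (by linarith), Real.rpow_one]
    ring
  calc (b / t) ^ (r - 1) * b = b ^ (r - 2) / t ^ (r - 1) * b ^ 2 := by
        rw [Real.div_rpow hb ht.le, div_mul_eq_mul_div, hsplit]
        ring
    _ ≤ C ^ (r - 2) / t ^ (r - 1) * b ^ 2 := by gcongr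

lemma sum_mul_le_of_le_mul_rpow {ι : Type*} [Fintype ι] {e b : ι → ℝ} {M C t r : ℝ}
    (hM : 0 ≤ M) (hr : 2 ≤ r) (ht : 0 < t) (hb : ∀ j, 0 ≤ b j) (hbC : ∀ j, b j ≤ C)
    (he : ∀ j, e j ≤ M * (b j / t) ^ (r - 1)) :
    ∑ j, e j * b j ≤ M * C ^ (r - 2) / t ^ (r - 1) * ∑ j, b j ^ 2 := by
  rw [Finset.mul_sum]
  refine Finset.sum_le_sum fun j _ => ?_
  calc e j * b j ≤ M * ((b j / t) ^ (r - 1) * b j) := by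
        rw [← mul_assoc]
        exact mul_le_mul_of_nonneg_right (he j) (hb j)
    _ ≤ M * (C ^ (r - 2) / t ^ (r - 1) * b j ^ 2) :=
        mul_le_mul_of_nonneg_left (rpow_sub_one_div_mul_le (hb j) (hbC j) hr ht) hM
    _ = M * C ^ (r - 2) / t ^ (r - 1) * b j ^ 2 := by ring

/-- `x ^ (1/2 - η)` is the truncation level; the bound holds because
`η (5 + δ) ≤ δ / 6 ≤ δ / 2`. -/
lemma div_rpow_truncation_level_le {δ η x : ℝ} (hδ : 0 < δ) (hη : η = δ / 6 / (6 + δ))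
    (hx : 1 ≤ x) : x / (x ^ ((1 : ℝ) / 2 - η)) ^ ((6 : ℝ) + δ - 1) ≤ x ^ (-(3 : ℝ) / 2) := by
  have hexp : 1 - ((1 : ℝ) / 2 - η) * (6 + δ - 1) ≤ -(3 : ℝ) / 2 := by
    have hη' : η * (5 + δ) ≤ δ / 2 := by
      rw [hη, div_div, div_mul_eq_mul_div, div_le_div_iff₀ (by positivity) two_pos]
      nlinarith
    nlinarith
  rw [← Real.rpow_mul (by linarith)]
  calc x / x ^ (((1 : ℝ) / 2 - η) * (6 + δ - 1))
      = x ^ (1 - ((1 : ℝ) / 2 - η) * (6 + δ - 1)) := by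
        rw [Real.rpow_sub (by linarith), Real.rpow_one]
    _ ≤ x ^ (-(3 : ℝ) / 2) := Real.rpow_le_rpow_of_exponent_le hx hexp

end Growth

theorem centralization_eigenvalue_bound_general
    {Ω : Type*} [MeasurableSpace Ω] (μ : Measure Ω)
    (p m : ℕ → ℕ) (c : ℝ)
    (hcn : Tendsto (fun n => (p n : ℝ) / n) atTop (𝓝 c))
    (δ : ℝ) (hδ0 : 0 < δ)
    (η : ℝ) (hη : η = δ / 6 / (6 + δ))
    (X : ∀ n, Ω → Matrix (Fin (m n)) (Fin n) ℂ)
    (ν : Measure ℂ) [IsProbabilityMeasure ν]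
    (hXmeas : ∀ n j k, Measurable fun ω => X n ω j k)
    (hXlaw : ∀ n j k, Measure.map (fun ω => X n ω j k) μ = ν)
    (hmean : ∫ z, z ∂ν = 0)
    (hmomint : Integrable (fun z : ℂ => ‖z‖ ^ ((6 : ℝ) + δ)) ν)
    (B : ∀ n, Matrix (Fin (p n)) (Fin (m n)) ℂ)
    (bcol : ∀ n, Fin (m n) → ℝ)
    (hbcol : ∀ n j, bcol n j = Real.sqrt (∑ l, ‖B n l j‖ ^ 2))
    (C₁ C₂ : ℝ)
    (hb1 : ∀ n j, bcol n j ≤ C₁)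
    (hb2 : ∀ n, ∑ k, bcol n k ^ 2 ≤ C₂ * p n)
    (Xh : ∀ n, Ω → Matrix (Fin (m n)) (Fin n) ℂ)
    (hXh : ∀ n ω j k, Xh n ω j k =
      if ‖X n ω j k‖ * bcol n j ≤ (n : ℝ) ^ ((1 : ℝ) / 2 - η) then X n ω j k else 0)
    (EXh : ∀ n, Matrix (Fin (m n)) (Fin n) ℂ)
    (hEXh : ∀ n j k, EXh n j k = ∫ ω, Xh n ω j k ∂μ)
    (S1 S2 : ∀ n, Ω → Matrix (Fin (p n)) (Fin (p n)) ℂ)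
    (hS1 : ∀ n ω, S1 n ω = (n : ℂ)⁻¹ • (B n * Xh n ω * (Xh n ω)ᴴ * (B n)ᴴ))
    (hS2 : ∀ n ω, S2 n ω =
      (n : ℂ)⁻¹ • (B n * (Xh n ω - EXh n) * (Xh n ω - EXh n)ᴴ * (B n)ᴴ))
    (hS1herm : ∀ n ω, (S1 n ω).IsHermitian)
    (hS2herm : ∀ n ω, (S2 n ω).IsHermitian) :
    ∃ C : ℝ, 0 < C ∧ ∀ n : ℕ, 0 < n → ∀ (ω : Ω) (k : Fin (p n)),
      |Real.sqrt (kthLargest (hS1herm n ω) k) - Real.sqrt (kthLargest (hS2herm n ω) k)|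
        ≤ C * (n : ℝ) ^ (-(3 : ℝ) / 2) := by
  obtain ⟨K, hK0, hK⟩ := exists_nonneg_le_mul_of_tendsto_div hcn
  set M := ∫ z, ‖z‖ ^ ((6 : ℝ) + δ) ∂ν
  have hM : 0 ≤ M := integral_nonneg fun z => by positivity
  set D := M * |C₁| ^ ((6 : ℝ) + δ - 2) * |C₂| * K
  refine ⟨D + 1, by positivity, fun n hn ω k => ?_⟩
  have hn1 : (1 : ℝ) ≤ n := Nat.one_le_cast.mpr hn
  set t := (n : ℝ) ^ ((1 : ℝ) / 2 - η)
  have ht : 0 < t := by positivity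
  have hb0 : ∀ j, 0 ≤ bcol n j := fun j => hbcol n j ▸ Real.sqrt_nonneg _
  have hbnorm : ∀ j, ‖WithLp.toLp 2 (fun l => B n l j)‖ = bcol n j := fun j => by
    rw [hbcol, EuclideanSpace.norm_eq]
  have hE : ∀ j k, ‖EXh n j k‖ ≤ M * (bcol n j / t) ^ ((6 : ℝ) + δ - 1) := fun j k => by
    simp only [hEXh, hXh]
    exact norm_integral_truncation_comp_le (hXmeas n j k) (hXlaw n j k) hmean (by linarith)
      hmomint (hb0 j) ht
  refine abs_sqrt_kthLargest_sub_le_of_sum_norm_mul_norm_col_le hn (B n) (Xh n ω) (EXh n)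
    (fun k => ?_) (hS1herm n ω) (hS2herm n ω) (hS1 n ω) (hS2 n ω) k
  simp only [hbnorm]
  calc ∑ j, ‖EXh n j k‖ * bcol n j
      ≤ M * |C₁| ^ ((6 : ℝ) + δ - 2) / t ^ ((6 : ℝ) + δ - 1) * ∑ j, bcol n j ^ 2 :=
        sum_mul_le_of_le_mul_rpow hM (by linarith) ht hb0
          (fun j => (hb1 n j).trans (le_abs_self _)) fun j => hE j k
    _ ≤ M * |C₁| ^ ((6 : ℝ) + δ - 2) / t ^ ((6 : ℝ) + δ - 1) * (|C₂| * (K * n)) := by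
        gcongr
        exact (hb2 n).trans
          (mul_le_mul (le_abs_self _) (hK n hn) (by positivity) (by positivity))
    _ = D * (n / t ^ ((6 : ℝ) + δ - 1)) := by ring
    _ ≤ (D + 1) * (n : ℝ) ^ (-(3 : ℝ) / 2) := by
        gcongr
        · linarith
        · exact div_rpow_truncation_level_le hδ0 hη hn1

/-- **Centralization step.**  With `X̂_n` the truncated matrix (entries truncated at
`n^{1/2-η}/b_j`), let `λ_k` and `λ̂_k` denote (in decreasing order) the eigenvalues of
`(1/n) Bₙ X̂ₙ X̂ₙ* Bₙ*` and of `(1/n) Bₙ (X̂ₙ - E X̂ₙ)(X̂ₙ - E X̂ₙ)* Bₙ*`.  Then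
`max_k |λ_k^{1/2} - λ̂_k^{1/2}| ≤ C n^{-3/2}` for a constant `C` not depending on `n`. -/
theorem centralization_eigenvalue_bound
    {Ω : Type*} [MeasurableSpace Ω] (μ : Measure Ω) [IsProbabilityMeasure μ]
    (p m : ℕ → ℕ) (c : ℝ) (hc : 0 < c)
    (hcn : Tendsto (fun n => (p n : ℝ) / n) atTop (𝓝 c))
    (δ : ℝ) (hδ0 : 0 < δ) (hδ1 : δ < 1)
    (η : ℝ) (hη : η = δ / 6 / (6 + δ))
    (X : ∀ n, Ω → Matrix (Fin (m n)) (Fin n) ℂ)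
    (ν : Measure ℂ) [IsProbabilityMeasure ν]
    (hXmeas : ∀ n j k, Measurable fun ω => X n ω j k)
    (hXlaw : ∀ n j k, Measure.map (fun ω => X n ω j k) μ = ν)
    (hXindep : ∀ n, iIndepFun
      (fun jk : Fin (m n) × Fin n => fun ω => X n ω jk.1 jk.2) μ)
    (hmean : ∫ z, z ∂ν = 0) (hvar : ∫ z, ‖z‖ ^ 2 ∂ν = 1)
    (μ₆ : ℝ) (hmom : ∫ z, ‖z‖ ^ ((6 : ℝ) + δ) ∂ν = μ₆)
    (hmomint : Integrable (fun z : ℂ => ‖z‖ ^ ((6 : ℝ) + δ)) ν)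
    (B : ∀ n, Matrix (Fin (p n)) (Fin (m n)) ℂ)
    (bcol : ∀ n, Fin (m n) → ℝ)
    (hbcol : ∀ n j, bcol n j = Real.sqrt (∑ l, ‖B n l j‖ ^ 2))
    (C₁ C₂ : ℝ)
    (hb1 : ∀ n j, bcol n j ≤ C₁)
    (hb2 : ∀ n, ∑ k, bcol n k ^ 2 ≤ C₂ * p n)
    (Xh : ∀ n, Ω → Matrix (Fin (m n)) (Fin n) ℂ)
    (hXh : ∀ n ω j k, Xh n ω j k =
      if ‖X n ω j k‖ * bcol n j ≤ (n : ℝ) ^ ((1 : ℝ) / 2 - η) then X n ω j k else 0)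
    (EXh : ∀ n, Matrix (Fin (m n)) (Fin n) ℂ)
    (hEXh : ∀ n j k, EXh n j k = ∫ ω, Xh n ω j k ∂μ)
    (S1 S2 : ∀ n, Ω → Matrix (Fin (p n)) (Fin (p n)) ℂ)
    (hS1 : ∀ n ω, S1 n ω = (n : ℂ)⁻¹ • (B n * Xh n ω * (Xh n ω)ᴴ * (B n)ᴴ))
    (hS2 : ∀ n ω, S2 n ω =
      (n : ℂ)⁻¹ • (B n * (Xh n ω - EXh n) * (Xh n ω - EXh n)ᴴ * (B n)ᴴ))
    (hS1herm : ∀ n ω, (S1 n ω).IsHermitian)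
    (hS2herm : ∀ n ω, (S2 n ω).IsHermitian) :
    ∃ C : ℝ, 0 < C ∧ ∀ n : ℕ, 0 < n → ∀ (ω : Ω) (k : Fin (p n)),
      |Real.sqrt (kthLargest (hS1herm n ω) k) - Real.sqrt (kthLargest (hS2herm n ω) k)|
        ≤ C * (n : ℝ) ^ (-(3 : ℝ) / 2) :=
  centralization_eigenvalue_bound_general μ p m c hcn δ hδ0 η hη X ν hXmeas hXlaw hmean hmomint B
    bcol hbcol C₁ C₂ hb1 hb2 Xh hXh EXh hEXh S1 S2 hS1 hS2 hS1herm hS2herm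
end

section
/- Let x be a complex random variable with E x = 0, E|x|² = 1 and E|x|^{6+δ} ≤ μ for some 0<δ<1, let b > 0, and set hat-x = x·1(|x| ≤ n^{1/2−η}/b) with η = (δ/6)/(6+δ) and σ² = E| hat-x − E hat-x |². Then 1 − σ² ≤ 2 μ b^{4+δ} / n² ; moreover | E hat-x | ≤ b^{5+δ} n^{−5/2−δ/3} E|x|^{6+δ} ≤ C b n^{−5/2} whenever b is bounded by a fixed constant. -/
/-!
On the tail `‖x‖ > T` one has `‖x‖ ^ k ≤ ‖x‖ ^ p / T ^ (p - k)`, hence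
`E[‖x‖ ^ k; ‖x‖ > T] ≤ E ‖x‖ ^ p / T ^ (p - k)`. As `E x = 0`, the mean of the truncation
`x̂ = x 1(‖x‖ ≤ T)` is minus the mean of the tail, so `‖E x̂‖ ≤ E ‖x‖ ^ p / T ^ (p - 1)`, and
`1 - σ² = E[‖x‖ ^ 2; ‖x‖ > T] + ‖E x̂‖ ^ 2 ≤ 2 E ‖x‖ ^ p / T ^ (p - 2)` by Jensen for the tail.
For `p = 6 + δ` and `T = n ^ (1/2 - η) / b` the choice of `η` makes
`(1/2 - η)(4 + δ) ≥ 2` and `(1/2 - η)(5 + δ) ≥ 5/2 + δ/3`.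
-/

open MeasureTheory

section Variance

variable {Ω F : Type*} [MeasurableSpace Ω] {μ : Measure Ω} [IsProbabilityMeasure μ]
  [NormedAddCommGroup F] [InnerProductSpace ℝ F] [CompleteSpace F] {y : Ω → F}

theorem integral_norm_sub_integral_sq (hy : Integrable y μ)
    (hy2 : Integrable (fun ω => ‖y ω‖ ^ 2) μ) :
    ∫ ω, ‖y ω - ∫ ω', y ω' ∂μ‖ ^ 2 ∂μ = ∫ ω, ‖y ω‖ ^ 2 ∂μ - ‖∫ ω, y ω ∂μ‖ ^ 2 := by
  set m := ∫ ω, y ω ∂μ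
  have hcross : Integrable (fun ω => 2 * inner ℝ (y ω) m) μ := (hy.inner_const m).const_mul 2
  have hdiff : Integrable (fun ω => ‖y ω‖ ^ 2 - 2 * inner ℝ (y ω) m) μ := hy2.sub hcross
  have hinner : ∫ ω, inner ℝ (y ω) m ∂μ = ‖m‖ ^ 2 := by
    simp_rw [real_inner_comm m]
    rw [integral_inner hy, real_inner_self_eq_norm_sq]
  simp_rw [norm_sub_sq_real]
  rw [integral_add hdiff (integrable_const _), integral_sub hy2 hcross,
    integral_const_mul, hinner, integral_const, probReal_univ, one_smul]
  ring

theorem sq_norm_integral_le_integral_sq_norm (hy : Integrable y μ)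
    (hy2 : Integrable (fun ω => ‖y ω‖ ^ 2) μ) :
    ‖∫ ω, y ω ∂μ‖ ^ 2 ≤ ∫ ω, ‖y ω‖ ^ 2 ∂μ := by
  have := integral_norm_sub_integral_sq hy hy2
  have : 0 ≤ ∫ ω, ‖y ω - ∫ ω', y ω' ∂μ‖ ^ 2 ∂μ := integral_nonneg fun _ => by positivity
  linarith

end Variance

theorem Real.pow_mul_rpow_le_rpow_add {a t s : ℝ} (ht : 0 < t) (hta : t ≤ a) (hs : 0 ≤ s)
    (k : ℕ) : a ^ k * t ^ s ≤ a ^ (k + s) := by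
  have ha : 0 < a := ht.trans_le hta
  rw [Real.rpow_add ha, Real.rpow_natCast]
  gcongr

section Truncation

variable {Ω E : Type*} [NormedAddCommGroup E] {x : Ω → E} {T : ℝ}

theorem norm_indicator_norm_le_le (hT : 0 ≤ T) (ω : Ω) :
    ‖{ω | ‖x ω‖ ≤ T}.indicator x ω‖ ≤ T := by
  by_cases h : ‖x ω‖ ≤ T <;> simp [h, hT]

theorem norm_indicator_compl_pow_mul_rpow_le (hT : 0 < T) {k : ℕ} (hk : k ≠ 0) {p : ℝ}
    (hkp : k ≤ p) (ω : Ω) :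
    ‖{ω | ‖x ω‖ ≤ T}ᶜ.indicator x ω‖ ^ k * T ^ (p - k) ≤ ‖x ω‖ ^ p := by
  by_cases h : ‖x ω‖ ≤ T
  · simp only [Set.mem_compl_iff, Set.mem_ofPred_eq, h, not_true_eq_false, not_false_eq_true,
      Set.indicator_of_notMem, norm_zero, zero_pow hk, zero_mul]
    positivity
  · rw [Set.indicator_of_mem (show ω ∈ {ω | ‖x ω‖ ≤ T}ᶜ from h)]
    simpa using Real.pow_mul_rpow_le_rpow_add hT (not_le.1 h).le (sub_nonneg.2 hkp) k

theorem sq_norm_eq_sq_norm_indicator_add_sq_norm_indicator_compl (s : Set Ω) (ω : Ω) :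
    ‖x ω‖ ^ 2 = ‖s.indicator x ω‖ ^ 2 + ‖sᶜ.indicator x ω‖ ^ 2 := by
  by_cases h : ω ∈ s <;> simp [h]

theorem ite_norm_mul_le_eq_indicator (x : Ω → E) {b : ℝ} (hb : 0 < b) (N : ℝ) :
    (fun ω => if ‖x ω‖ * b ≤ N then x ω else 0) = {ω | ‖x ω‖ ≤ N / b}.indicator x := by
  funext ω
  simp only [Set.indicator, Set.mem_ofPred_eq, le_div_iff₀ hb]

variable [MeasurableSpace Ω] {μ : Measure Ω}

theorem measurableSet_norm_le (hx : StronglyMeasurable x) : MeasurableSet {ω | ‖x ω‖ ≤ T} :=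
  measurableSet_le hx.norm.measurable measurable_const

theorem integrable_norm_indicator_norm_le_pow [IsFiniteMeasure μ] (hx : StronglyMeasurable x)
    (hT : 0 ≤ T) (k : ℕ) :
    Integrable (fun ω => ‖{ω | ‖x ω‖ ≤ T}.indicator x ω‖ ^ k) μ := by
  refine Integrable.of_bound ((hx.indicator (measurableSet_norm_le hx)).norm.measurable.pow_const k
    ).aestronglyMeasurable (T ^ k) (ae_of_all _ fun ω => ?_)
  rw [Real.norm_eq_abs, abs_of_nonneg (by positivity)]
  exact pow_le_pow_left₀ (norm_nonneg _) (norm_indicator_norm_le_le hT ω) k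

theorem integrable_norm_indicator_compl_pow (hx : StronglyMeasurable x) (hT : 0 < T) {k : ℕ}
    (hk : k ≠ 0) {p : ℝ} (hkp : k ≤ p) (hp : Integrable (fun ω => ‖x ω‖ ^ p) μ) :
    Integrable (fun ω => ‖{ω | ‖x ω‖ ≤ T}ᶜ.indicator x ω‖ ^ k) μ := by
  refine (hp.div_const (T ^ (p - k))).mono' ((hx.indicator (measurableSet_norm_le hx).compl
    ).norm.measurable.pow_const k).aestronglyMeasurable (ae_of_all _ fun ω => ?_)
  rw [Real.norm_eq_abs, abs_of_nonneg (by positivity), le_div_iff₀ (by positivity)]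
  exact norm_indicator_compl_pow_mul_rpow_le hT hk hkp ω

theorem integral_norm_indicator_compl_pow_le (hx : StronglyMeasurable x) (hT : 0 < T) {k : ℕ}
    (hk : k ≠ 0) {p : ℝ} (hkp : k ≤ p) (hp : Integrable (fun ω => ‖x ω‖ ^ p) μ) :
    ∫ ω, ‖{ω | ‖x ω‖ ≤ T}ᶜ.indicator x ω‖ ^ k ∂μ ≤ (∫ ω, ‖x ω‖ ^ p ∂μ) / T ^ (p - k) := by
  rw [← integral_div]
  refine integral_mono (integrable_norm_indicator_compl_pow hx hT hk hkp hp)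
    (hp.div_const _) fun ω => ?_
  rw [le_div_iff₀ (by positivity)]
  exact norm_indicator_compl_pow_mul_rpow_le hT hk hkp ω

theorem integrable_indicator_norm_le [IsFiniteMeasure μ] (hx : StronglyMeasurable x)
    (hT : 0 ≤ T) :
    Integrable ({ω | ‖x ω‖ ≤ T}.indicator x) μ :=
  .of_bound (hx.indicator (measurableSet_norm_le hx)).aestronglyMeasurable T
    (ae_of_all _ (norm_indicator_norm_le_le hT))

theorem integrable_indicator_compl_norm_le (hx : StronglyMeasurable x) (hT : 0 < T) {p : ℝ}
    (hp1 : 1 ≤ p) (hp : Integrable (fun ω => ‖x ω‖ ^ p) μ) :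
    Integrable ({ω | ‖x ω‖ ≤ T}ᶜ.indicator x) μ :=
  (integrable_norm_iff (hx.indicator (measurableSet_norm_le hx).compl).aestronglyMeasurable).1
    (by simpa using integrable_norm_indicator_compl_pow hx hT one_ne_zero (by simpa) hp)

end Truncation

section MeanZero

variable {Ω E : Type*} [MeasurableSpace Ω] {μ : Measure Ω} [IsFiniteMeasure μ]
  [NormedAddCommGroup E] [NormedSpace ℝ E] {x : Ω → E} {T p : ℝ}

theorem integral_indicator_norm_le_eq_neg (hx : StronglyMeasurable x) (hmean : ∫ ω, x ω ∂μ = 0)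
    (hT : 0 < T) (hp1 : 1 ≤ p) (hp : Integrable (fun ω => ‖x ω‖ ^ p) μ) :
    ∫ ω, {ω | ‖x ω‖ ≤ T}.indicator x ω ∂μ = -∫ ω, {ω | ‖x ω‖ ≤ T}ᶜ.indicator x ω ∂μ := by
  rw [eq_neg_iff_add_eq_zero, ← integral_add (integrable_indicator_norm_le hx hT.le)
    (integrable_indicator_compl_norm_le hx hT hp1 hp), ← hmean]
  simp_rw [Set.indicator_self_add_compl_apply]

theorem norm_integral_indicator_norm_le_le (hx : StronglyMeasurable x)
    (hmean : ∫ ω, x ω ∂μ = 0) (hT : 0 < T) (hp1 : 1 ≤ p)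
    (hp : Integrable (fun ω => ‖x ω‖ ^ p) μ) :
    ‖∫ ω, {ω | ‖x ω‖ ≤ T}.indicator x ω ∂μ‖ ≤ (∫ ω, ‖x ω‖ ^ p ∂μ) / T ^ (p - 1) :=
  calc ‖∫ ω, {ω | ‖x ω‖ ≤ T}.indicator x ω ∂μ‖
      = ‖∫ ω, {ω | ‖x ω‖ ≤ T}ᶜ.indicator x ω ∂μ‖ := by
        rw [integral_indicator_norm_le_eq_neg hx hmean hT hp1 hp, norm_neg]
    _ ≤ ∫ ω, ‖{ω | ‖x ω‖ ≤ T}ᶜ.indicator x ω‖ ∂μ := norm_integral_le_integral_norm _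
    _ ≤ (∫ ω, ‖x ω‖ ^ p ∂μ) / T ^ (p - 1) := by
        simpa using integral_norm_indicator_compl_pow_le hx hT one_ne_zero (by simpa) hp

end MeanZero

section TruncatedVariance

variable {Ω F : Type*} [MeasurableSpace Ω] {μ : Measure Ω} [IsProbabilityMeasure μ]
  [NormedAddCommGroup F] [InnerProductSpace ℝ F] [CompleteSpace F] {x : Ω → F} {T p : ℝ}

theorem integral_sq_norm_sub_integral_sq_norm_indicator_sub_le (hx : StronglyMeasurable x)
    (hmean : ∫ ω, x ω ∂μ = 0) (hT : 0 < T) (hp2 : 2 ≤ p)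
    (hp : Integrable (fun ω => ‖x ω‖ ^ p) μ) :
    ∫ ω, ‖x ω‖ ^ 2 ∂μ - ∫ ω, ‖{ω | ‖x ω‖ ≤ T}.indicator x ω -
        ∫ ω', {ω | ‖x ω‖ ≤ T}.indicator x ω' ∂μ‖ ^ 2 ∂μ
      ≤ 2 * ((∫ ω, ‖x ω‖ ^ p ∂μ) / T ^ (p - 2)) := by
  set s := {ω | ‖x ω‖ ≤ T}
  have hp1 : 1 ≤ p := by linarith
  have htrunc2 := integrable_norm_indicator_norm_le_pow (μ := μ) hx hT.le 2
  have htail2 := integrable_norm_indicator_compl_pow hx hT two_ne_zero (by simpa) hp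
  have hsplit : ∫ ω, ‖x ω‖ ^ 2 ∂μ =
      ∫ ω, ‖s.indicator x ω‖ ^ 2 ∂μ + ∫ ω, ‖sᶜ.indicator x ω‖ ^ 2 ∂μ := by
    rw [← integral_add htrunc2 htail2]
    simp_rw [← sq_norm_eq_sq_norm_indicator_add_sq_norm_indicator_compl]
  have hmean_sq : ‖∫ ω, s.indicator x ω ∂μ‖ ^ 2 ≤ ∫ ω, ‖sᶜ.indicator x ω‖ ^ 2 ∂μ := by
    rw [integral_indicator_norm_le_eq_neg hx hmean hT hp1 hp, norm_neg]
    exact sq_norm_integral_le_integral_sq_norm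
      (integrable_indicator_compl_norm_le hx hT hp1 hp) htail2
  have htail := integral_norm_indicator_compl_pow_le hx hT two_ne_zero (by simpa) hp
  rw [integral_norm_sub_integral_sq (integrable_indicator_norm_le hx hT.le) htrunc2]
  push_cast at htail
  linarith

end TruncatedVariance

theorem div_div_rpow_le {N b I a s e : ℝ} (hN : 1 ≤ N) (hb : 0 < b) (hI : 0 ≤ I)
    (he : e ≤ a * s) : I / (N ^ a / b) ^ s ≤ b ^ s * I / N ^ e := by
  have hN0 : 0 < N := by linarith
  rw [Real.div_rpow (by positivity) hb.le, ← Real.rpow_mul hN0.le, div_div_eq_mul_div, mul_comm]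
  gcongr

theorem two_le_one_half_sub_mul {δ : ℝ} (hδ : 0 ≤ δ) :
    2 ≤ (1 / 2 - δ / 6 / (6 + δ)) * (4 + δ) := by
  have : (1 / 2 - δ / 6 / (6 + δ)) * (4 + δ) - 2 = δ * (14 + 2 * δ) / (6 * (6 + δ)) := by
    field_simp
    ring
  have : 0 ≤ δ * (14 + 2 * δ) / (6 * (6 + δ)) := by positivity
  linarith

theorem le_one_half_sub_mul {δ : ℝ} (hδ : 0 ≤ δ) :
    5 / 2 + δ / 3 ≤ (1 / 2 - δ / 6 / (6 + δ)) * (5 + δ) := by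
  have : (1 / 2 - δ / 6 / (6 + δ)) * (5 + δ) - (5 / 2 + δ / 3) = δ / (6 * (6 + δ)) := by
    field_simp
    ring
  have : 0 ≤ δ / (6 * (6 + δ)) := by positivity
  linarith

theorem rpow_mul_rpow_le_mul_mul_rpow {δ b C N : ℝ} (hδ : 0 ≤ δ) (hb : 0 < b) (hbC : b ≤ C)
    (hN : 1 ≤ N) :
    b ^ ((5 : ℝ) + δ) * N ^ (-(5 : ℝ) / 2 - δ / 3)
      ≤ C ^ ((4 : ℝ) + δ) * b * N ^ (-(5 : ℝ) / 2) := by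
  rw [show (5 : ℝ) + δ = 1 + (4 + δ) by ring, Real.rpow_add hb, Real.rpow_one,
    mul_comm (C ^ _) b]
  have hC : 0 ≤ C := hb.le.trans hbC
  gcongr
  linarith

section SixMoments

variable {Ω : Type*} [MeasurableSpace Ω] {μ : Measure Ω} {δ : ℝ}

theorem one_sub_integral_sq_norm_truncation_sub_le [IsProbabilityMeasure μ] {F : Type*}
    [NormedAddCommGroup F] [InnerProductSpace ℝ F] [CompleteSpace F] {x : Ω → F} (hδ : 0 ≤ δ)
    (hx : StronglyMeasurable x) (hmean : ∫ ω, x ω ∂μ = 0) (hvar : ∫ ω, ‖x ω‖ ^ 2 ∂μ = 1) {μ₆ : ℝ}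
    (hmom : ∫ ω, ‖x ω‖ ^ ((6 : ℝ) + δ) ∂μ ≤ μ₆)
    (hmomint : Integrable (fun ω => ‖x ω‖ ^ ((6 : ℝ) + δ)) μ) {n : ℕ} (hn : 0 < n) {b : ℝ}
    (hb : 0 < b) :
    1 - ∫ ω, ‖{ω | ‖x ω‖ ≤ (n : ℝ) ^ ((1 : ℝ) / 2 - δ / 6 / (6 + δ)) / b}.indicator x ω -
        ∫ ω', {ω | ‖x ω‖ ≤ (n : ℝ) ^ ((1 : ℝ) / 2 - δ / 6 / (6 + δ)) / b}.indicator x ω' ∂μ‖ ^ 2 ∂μ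
      ≤ 2 * μ₆ * b ^ ((4 : ℝ) + δ) / (n : ℝ) ^ 2 := by
  have hN : (1 : ℝ) ≤ n := by exact_mod_cast hn
  have hI : 0 ≤ ∫ ω, ‖x ω‖ ^ ((6 : ℝ) + δ) ∂μ := integral_nonneg fun _ => by positivity
  have h := integral_sq_norm_sub_integral_sq_norm_indicator_sub_le hx hmean
    (T := (n : ℝ) ^ ((1 : ℝ) / 2 - δ / 6 / (6 + δ)) / b) (by positivity) (by linarith) hmomint
  rw [hvar, show (6 : ℝ) + δ - 2 = 4 + δ by ring] at h
  have hlevel := div_div_rpow_le hN hb hI (two_le_one_half_sub_mul hδ)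
  rw [Real.rpow_two] at hlevel
  calc _ ≤ _ := h
    _ ≤ 2 * (b ^ ((4 : ℝ) + δ) * μ₆ / (n : ℝ) ^ 2) :=
        mul_le_mul_of_nonneg_left (hlevel.trans (by gcongr)) two_pos.le
    _ = 2 * μ₆ * b ^ ((4 : ℝ) + δ) / (n : ℝ) ^ 2 := by ring

theorem norm_integral_truncation_le_s8 [IsFiniteMeasure μ] {E : Type*} [NormedAddCommGroup E]
    [NormedSpace ℝ E] {x : Ω → E} (hδ : 0 ≤ δ) (hx : StronglyMeasurable x)
    (hmean : ∫ ω, x ω ∂μ = 0) (hmomint : Integrable (fun ω => ‖x ω‖ ^ ((6 : ℝ) + δ)) μ)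
    {n : ℕ} (hn : 0 < n) {b : ℝ} (hb : 0 < b) :
    ‖∫ ω, {ω | ‖x ω‖ ≤ (n : ℝ) ^ ((1 : ℝ) / 2 - δ / 6 / (6 + δ)) / b}.indicator x ω ∂μ‖
      ≤ b ^ ((5 : ℝ) + δ) * (n : ℝ) ^ (-(5 : ℝ) / 2 - δ / 3) *
          ∫ ω, ‖x ω‖ ^ ((6 : ℝ) + δ) ∂μ := by
  have hN : (1 : ℝ) ≤ n := by exact_mod_cast hn
  have hI : 0 ≤ ∫ ω, ‖x ω‖ ^ ((6 : ℝ) + δ) ∂μ := integral_nonneg fun _ => by positivity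
  have h := norm_integral_indicator_norm_le_le hx hmean
    (T := (n : ℝ) ^ ((1 : ℝ) / 2 - δ / 6 / (6 + δ)) / b) (by positivity) (by linarith) hmomint
  rw [show (6 : ℝ) + δ - 1 = 5 + δ by ring] at h
  refine h.trans ((div_div_rpow_le hN hb hI (le_one_half_sub_mul hδ)).trans_eq ?_)
  rw [show -(5 : ℝ) / 2 - δ / 3 = -(5 / 2 + δ / 3) by ring, Real.rpow_neg (by positivity)]
  ring

end SixMoments

theorem truncated_variable_variance_and_mean_bounds_general
    {Ω : Type*} [MeasurableSpace Ω] (μ : Measure Ω) [IsProbabilityMeasure μ]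
    (δ : ℝ) (hδ0 : 0 < δ)
    (η : ℝ) (hη : η = δ / 6 / (6 + δ))
    (x : Ω → ℂ) (hxmeas : Measurable x)
    (hmean : ∫ ω, x ω ∂μ = 0) (hvar : ∫ ω, ‖x ω‖ ^ 2 ∂μ = 1)
    (μ₆ : ℝ) (hmom : ∫ ω, ‖x ω‖ ^ ((6 : ℝ) + δ) ∂μ ≤ μ₆)
    (hmomint : Integrable (fun ω => ‖x ω‖ ^ ((6 : ℝ) + δ)) μ)
    (C₁ : ℝ) (hC₁ : 0 < C₁) :
    (∀ (n : ℕ), 0 < n → ∀ b : ℝ, 0 < b → ∀ xh : Ω → ℂ,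
      (∀ ω, xh ω = if ‖x ω‖ * b ≤ (n : ℝ) ^ ((1 : ℝ) / 2 - η) then x ω else 0) →
        (1 - ∫ ω, ‖xh ω - ∫ ω', xh ω' ∂μ‖ ^ 2 ∂μ
            ≤ 2 * μ₆ * b ^ ((4 : ℝ) + δ) / (n : ℝ) ^ 2) ∧
        ‖∫ ω, xh ω ∂μ‖ ≤ b ^ ((5 : ℝ) + δ) * (n : ℝ) ^ (-(5 : ℝ) / 2 - δ / 3) *
          ∫ ω, ‖x ω‖ ^ ((6 : ℝ) + δ) ∂μ) ∧
    (∃ C : ℝ, 0 < C ∧ ∀ (n : ℕ), 0 < n → ∀ b : ℝ, 0 < b → b ≤ C₁ → ∀ xh : Ω → ℂ,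
      (∀ ω, xh ω = if ‖x ω‖ * b ≤ (n : ℝ) ^ ((1 : ℝ) / 2 - η) then x ω else 0) →
        ‖∫ ω, xh ω ∂μ‖ ≤ C * b * (n : ℝ) ^ (-(5 : ℝ) / 2)) := by
  subst hη
  have hx := hxmeas.stronglyMeasurable
  have hI : 0 ≤ ∫ ω, ‖x ω‖ ^ ((6 : ℝ) + δ) ∂μ := integral_nonneg fun _ => by positivity
  refine ⟨fun n hn b hb xh hxh => ?_, C₁ ^ ((4 : ℝ) + δ) * μ₆ + 1,
    add_pos_of_nonneg_of_pos (mul_nonneg (by positivity) (hI.trans hmom)) one_pos,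
    fun n hn b hb hbC xh hxh => ?_⟩ <;>
  obtain rfl := (funext hxh).trans (ite_norm_mul_le_eq_indicator x hb _)
  · exact ⟨one_sub_integral_sq_norm_truncation_sub_le hδ0.le hx hmean hvar hmom hmomint hn hb,
      norm_integral_truncation_le_s8 hδ0.le hx hmean hmomint hn hb⟩
  have hN : (1 : ℝ) ≤ n := by exact_mod_cast hn
  have hbn : 0 ≤ b * (n : ℝ) ^ (-(5 : ℝ) / 2) := by positivity
  calc _ ≤ b ^ ((5 : ℝ) + δ) * (n : ℝ) ^ (-(5 : ℝ) / 2 - δ / 3) * ∫ ω, ‖x ω‖ ^ ((6 : ℝ) + δ) ∂μ :=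
        norm_integral_truncation_le_s8 hδ0.le hx hmean hmomint hn hb
    _ ≤ C₁ ^ ((4 : ℝ) + δ) * b * (n : ℝ) ^ (-(5 : ℝ) / 2) * μ₆ :=
        mul_le_mul (rpow_mul_rpow_le_mul_mul_rpow hδ0.le hb hbC hN) hmom hI (by positivity)
    _ ≤ (C₁ ^ ((4 : ℝ) + δ) * μ₆ + 1) * b * (n : ℝ) ^ (-(5 : ℝ) / 2) := by linarith

/-- **Variance deficit and mean bounds for a truncated variable.**  Let `x` be a complex
random variable with `E x = 0`, `E|x|² = 1` and `E|x|^{6+δ} ≤ μ₆`, let `b > 0` and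
`x̂ = x·1(|x| ≤ n^{1/2-η}/b)` with `η = (δ/6)/(6+δ)`, and `σ² = E|x̂ - E x̂|²`.  Then
`1 - σ² ≤ 2 μ₆ b^{4+δ}/n²`, `|E x̂| ≤ b^{5+δ} n^{-5/2-δ/3} E|x|^{6+δ}`, and whenever
`b ≤ C₁` also `|E x̂| ≤ C b n^{-5/2}` for a constant `C` not depending on `n` or `b`. -/
theorem truncated_variable_variance_and_mean_bounds
    {Ω : Type*} [MeasurableSpace Ω] (μ : Measure Ω) [IsProbabilityMeasure μ]
    (δ : ℝ) (hδ0 : 0 < δ) (hδ1 : δ < 1)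
    (η : ℝ) (hη : η = δ / 6 / (6 + δ))
    (x : Ω → ℂ) (hxmeas : Measurable x)
    (hmean : ∫ ω, x ω ∂μ = 0) (hvar : ∫ ω, ‖x ω‖ ^ 2 ∂μ = 1)
    (μ₆ : ℝ) (hmom : ∫ ω, ‖x ω‖ ^ ((6 : ℝ) + δ) ∂μ ≤ μ₆)
    (hmomint : Integrable (fun ω => ‖x ω‖ ^ ((6 : ℝ) + δ)) μ)
    (C₁ : ℝ) (hC₁ : 0 < C₁) :
    (∀ (n : ℕ), 0 < n → ∀ b : ℝ, 0 < b → ∀ xh : Ω → ℂ,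
      (∀ ω, xh ω = if ‖x ω‖ * b ≤ (n : ℝ) ^ ((1 : ℝ) / 2 - η) then x ω else 0) →
        (1 - ∫ ω, ‖xh ω - ∫ ω', xh ω' ∂μ‖ ^ 2 ∂μ
            ≤ 2 * μ₆ * b ^ ((4 : ℝ) + δ) / (n : ℝ) ^ 2) ∧
        ‖∫ ω, xh ω ∂μ‖ ≤ b ^ ((5 : ℝ) + δ) * (n : ℝ) ^ (-(5 : ℝ) / 2 - δ / 3) *
          ∫ ω, ‖x ω‖ ^ ((6 : ℝ) + δ) ∂μ) ∧
    (∃ C : ℝ, 0 < C ∧ ∀ (n : ℕ), 0 < n → ∀ b : ℝ, 0 < b → b ≤ C₁ → ∀ xh : Ω → ℂ,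
      (∀ ω, xh ω = if ‖x ω‖ * b ≤ (n : ℝ) ^ ((1 : ℝ) / 2 - η) then x ω else 0) →
        ‖∫ ω, xh ω ∂μ‖ ≤ C * b * (n : ℝ) ^ (-(5 : ℝ) / 2)) :=
  truncated_variable_variance_and_mean_bounds_general μ δ hδ0 η hη x hxmeas hmean hvar μ₆ hmom
    hmomint C₁ hC₁
end
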